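/- Let α, c, σ > 0, set K = 2α³/(cσ²), and let r̂ ∈ (1/2, 1) be the unique solution of l(r̂) = K. For each ε ∈ (0, 2r̂ − 1), let r̄(ε) ∈ (0,1) be the unique solution of l(r̄(ε)) + l((1+ε)/2) = 2K. Then the function ε ↦ log((1+ε)/(1−ε)) + log(r̄(ε)/(1−r̄(ε))) is strictly increasing on (0, 2r̂ − 1). (Equivalently, the optimal continuation threshold z̄ = (σ²/(2α))·[log((1+ε)/(1−ε)) + log(r̄(ε)/(1−r̄(ε)))] is strictly increasing in the ambiguity parameter ε.) -/

import Mathlib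

/-!
Write `l = 2L + h` with `L r = log (r/(1-r))` and `h r = 1/(1-r) - 1/r` (`recipDiff`). Along
the curve `l (r̄ ε) + l ((1+ε)/2) = 2K`, the threshold is `L s + L r̄ = K - (h s + h r̄)/2` with
`s = (1+ε)/2`, so it suffices that `h s + h r̄` strictly decreases. As `ε` grows, `l s` rises by
some `Δ > 0` and `l r̄` falls by the same `Δ`. Since `h' / l' = r² + (1-r)²` is increasing on
`[1/2, 1)` and `s < r̂ < r̄`, Cauchy's mean value theorem shows that `h s` rises by less than
`h r̄` falls.
-/

/-- `l(r) = 2·log(r/(1−r)) − 1/r + 1/(1−r)`. -/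
noncomputable def l (r : ℝ) : ℝ := 2 * Real.log (r / (1 - r)) - 1 / r + 1 / (1 - r)

open Set Real

noncomputable def recipDiff (r : ℝ) : ℝ := 1 / (1 - r) - 1 / r

lemma log_div_one_sub_eq (r : ℝ) : log (r / (1 - r)) = (l r - recipDiff r) / 2 := by
  simp only [l, recipDiff]; ring

section Derivatives

variable {r : ℝ}

lemma hasDerivAt_log_div_one_sub (h0 : 0 < r) (h1 : r < 1) :
    HasDerivAt (fun x => log (x / (1 - x))) (1 / (r * (1 - r))) r := by
  have h1' : 1 - r ≠ 0 := by linarith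
  have hquot := (hasDerivAt_id' r).fun_div ((hasDerivAt_id' r).const_sub 1) h1'
  refine (hquot.log (div_pos h0 (by linarith)).ne').congr_deriv ?_
  field_simp
  ring

lemma hasDerivAt_recipDiff (h0 : r ≠ 0) (h1 : 1 - r ≠ 0) :
    HasDerivAt recipDiff ((r ^ 2 + (1 - r) ^ 2) / (r * (1 - r)) ^ 2) r := by
  have hd := ((hasDerivAt_const r (1 : ℝ)).fun_div ((hasDerivAt_id' r).const_sub 1) h1).sub
    ((hasDerivAt_const r (1 : ℝ)).fun_div (hasDerivAt_id' r) h0)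
  refine hd.congr_deriv ?_
  field_simp
  ring

lemma hasDerivAt_l (h0 : 0 < r) (h1 : r < 1) : HasDerivAt l (1 / (r * (1 - r)) ^ 2) r := by
  have h1' : 1 - r ≠ 0 := by linarith
  have hd := ((hasDerivAt_log_div_one_sub h0 h1).const_mul 2).add
    (hasDerivAt_recipDiff h0.ne' h1')
  have hl : l = fun x => 2 * log (x / (1 - x)) + recipDiff x := by
    ext x; simp only [l, recipDiff]; ring
  rw [hl]
  refine hd.congr_deriv ?_
  field_simp
  ring

end Derivatives

lemma l_strictMonoOn : StrictMonoOn l (Ioo 0 1) := by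
  refine strictMonoOn_of_hasDerivWithinAt_pos (f' := fun x => 1 / (x * (1 - x)) ^ 2)
    (convex_Ioo 0 1)
    (fun x hx => (hasDerivAt_l hx.1 hx.2).continuousAt.continuousWithinAt)
    (fun x hx => ?_) (fun x hx => ?_)
  · rw [interior_Ioo] at hx
    exact (hasDerivAt_l hx.1 hx.2).hasDerivWithinAt
  · rw [interior_Ioo] at hx
    have : 0 < x * (1 - x) := mul_pos hx.1 (by linarith [hx.2])
    positivity

lemma exists_recipDiff_sub_eq_mul_l_sub {a b : ℝ} (ha : 0 < a) (hab : a < b) (hb : b < 1) :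
    ∃ c ∈ Ioo a b, recipDiff b - recipDiff a = (c ^ 2 + (1 - c) ^ 2) * (l b - l a) := by
  have hsub : Icc a b ⊆ Ioo 0 1 := Icc_subset_Ioo ha hb
  have hl : ∀ x ∈ Icc a b, HasDerivAt l (1 / (x * (1 - x)) ^ 2) x :=
    fun x hx => hasDerivAt_l (hsub hx).1 (hsub hx).2
  have hh : ∀ x ∈ Icc a b, HasDerivAt recipDiff ((x ^ 2 + (1 - x) ^ 2) / (x * (1 - x)) ^ 2) x :=
    fun x hx => hasDerivAt_recipDiff (hsub hx).1.ne' (sub_pos.2 (hsub hx).2).ne'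
  obtain ⟨c, hc, hcauchy⟩ := exists_ratio_hasDerivAt_eq_ratio_slope l _ hab
    (HasDerivAt.continuousOn hl) (fun x hx => hl x (Ioo_subset_Icc_self hx))
    recipDiff _ (HasDerivAt.continuousOn hh) (fun x hx => hh x (Ioo_subset_Icc_self hx))
  refine ⟨c, hc, ?_⟩
  have hc0 : c ≠ 0 := by linarith [hc.1]
  have hc1 : 1 - c ≠ 0 := by linarith [hc.2]
  field_simp at hcauchy
  linear_combination hcauchy

lemma recipDiff_sub_lt_of_l_sub_eq {a b c d : ℝ} (ha : 1 / 2 ≤ a) (hab : a < b) (hbc : b ≤ c)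
    (hcd : c < d) (hd : d < 1) (hl : l b - l a = l d - l c) :
    recipDiff b - recipDiff a < recipDiff d - recipDiff c := by
  obtain ⟨x, hx, hx_eq⟩ := exists_recipDiff_sub_eq_mul_l_sub (by linarith) hab (by linarith)
  obtain ⟨y, hy, hy_eq⟩ := exists_recipDiff_sub_eq_mul_l_sub (by linarith) hcd hd
  have hΔ : 0 < l b - l a :=
    sub_pos.mpr (l_strictMonoOn ⟨by linarith, by linarith⟩ ⟨by linarith, by linarith⟩ hab)
  have hxy : x < y := hx.2.trans_le (hbc.trans_lt hy.1).le
  have hφ : x ^ 2 + (1 - x) ^ 2 < y ^ 2 + (1 - y) ^ 2 := by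
    nlinarith [mul_pos (sub_pos.mpr hxy) (by linarith [hx.1] : 0 < x + y - 1)]
  rw [hx_eq, hy_eq, ← hl]
  exact mul_lt_mul_of_pos_right hφ hΔ

theorem stmt_15_general (α c σ rhat : ℝ) (rbar : ℝ → ℝ)
    (hrhat : rhat ∈ Set.Ioo (1 / 2 : ℝ) 1)
    (hrhat_eq : l rhat = 2 * α ^ 3 / (c * σ ^ 2))
    (hrbar : ∀ ε ∈ Set.Ioo (0 : ℝ) (2 * rhat - 1),
      rbar ε ∈ Set.Ioo (0 : ℝ) 1 ∧
      l (rbar ε) + l ((1 + ε) / 2) = 2 * (2 * α ^ 3 / (c * σ ^ 2))) :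
    StrictMonoOn
      (fun ε : ℝ =>
        Real.log ((1 + ε) / (1 - ε)) + Real.log (rbar ε / (1 - rbar ε)))
      (Set.Ioo (0 : ℝ) (2 * rhat - 1)) := by
  set K := 2 * α ^ 3 / (c * σ ^ 2)
  have hrhat₀ : rhat ∈ Ioo 0 1 := ⟨by linarith [hrhat.1], hrhat.2⟩
  have hs : ∀ ε ∈ Ioo 0 (2 * rhat - 1), (1 + ε) / 2 ∈ Ioo 0 1 ∧ (1 + ε) / 2 < rhat :=
    fun ε hε => ⟨⟨by linarith [hε.1], by linarith [hε.2, hrhat.2]⟩, by linarith [hε.2]⟩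
  have hrhat_lt : ∀ ε ∈ Ioo 0 (2 * rhat - 1), rhat < rbar ε := by
    intro ε hε
    have hls : l ((1 + ε) / 2) < l rhat := l_strictMonoOn (hs ε hε).1 hrhat₀ (hs ε hε).2
    exact (l_strictMonoOn.lt_iff_lt hrhat₀ (hrbar ε hε).1).mp (by linarith [(hrbar ε hε).2])
  have hvalue : ∀ ε ∈ Ioo 0 (2 * rhat - 1),
      log ((1 + ε) / (1 - ε)) + log (rbar ε / (1 - rbar ε))
        = K - (recipDiff ((1 + ε) / 2) + recipDiff (rbar ε)) / 2 := by
    intro ε hε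
    have hodds : (1 + ε) / (1 - ε) = (1 + ε) / 2 / (1 - (1 + ε) / 2) := by
      field_simp; ring
    rw [hodds, log_div_one_sub_eq, log_div_one_sub_eq]
    linarith [(hrbar ε hε).2]
  intro ε₁ hε₁ ε₂ hε₂ hlt
  simp only [hvalue ε₁ hε₁, hvalue ε₂ hε₂]
  have hl : l ((1 + ε₂) / 2) - l ((1 + ε₁) / 2) = l (rbar ε₁) - l (rbar ε₂) := by
    linarith [(hrbar ε₁ hε₁).2, (hrbar ε₂ hε₂).2]
  have hrbar_anti : rbar ε₂ < rbar ε₁ := by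
    refine (l_strictMonoOn.lt_iff_lt (hrbar ε₂ hε₂).1 (hrbar ε₁ hε₁).1).mp ?_
    have hls : l ((1 + ε₁) / 2) < l ((1 + ε₂) / 2) :=
      l_strictMonoOn (hs ε₁ hε₁).1 (hs ε₂ hε₂).1 (by linarith)
    linarith
  have hgap := recipDiff_sub_lt_of_l_sub_eq (by linarith [hε₁.1]) (by linarith)
    ((hs ε₂ hε₂).2.trans (hrhat_lt ε₂ hε₂)).le hrbar_anti (hrbar ε₁ hε₁).1.2 hl
  linarith

theorem stmt_15 (α c σ rhat : ℝ) (rbar : ℝ → ℝ)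
    (hα : 0 < α) (hc : 0 < c) (hσ : 0 < σ)
    (hrhat : rhat ∈ Set.Ioo (1 / 2 : ℝ) 1)
    (hrhat_eq : l rhat = 2 * α ^ 3 / (c * σ ^ 2))
    (hrbar : ∀ ε ∈ Set.Ioo (0 : ℝ) (2 * rhat - 1),
      rbar ε ∈ Set.Ioo (0 : ℝ) 1 ∧
      l (rbar ε) + l ((1 + ε) / 2) = 2 * (2 * α ^ 3 / (c * σ ^ 2))) :
    StrictMonoOn
      (fun ε : ℝ =>
        Real.log ((1 + ε) / (1 - ε)) + Real.log (rbar ε / (1 - rbar ε)))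
      (Set.Ioo (0 : ℝ) (2 * rhat - 1)) :=
  stmt_15_general α c σ rhat rbar hrhat hrhat_eq hrbar
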